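/- Let n ≥ 1 and let m_1,...,m_n be nonnegative integers with m = m_1 + ... + m_n. Then there exist a BST S on [n] and a sequence σ of length m over [n], in which each i ∈ [n] occurs exactly m_i times, such that Λ'(S,σ) ≥ (1/4)·m·H(m_1,...,m_n). -/

import Mathlib

/-- A rooted tree (or the empty tree) on a subset `supp` of the vertex type `V`,
represented by parent pointers. -/
structure RTree (V : Type) where
  supp : Finset V
  parent : V → Option V
  parent_eq_none : ∀ v ∉ supp, parent v = none
  mem_of_parent : ∀ {v w : V}, parent v = some w → v ∈ supp ∧ w ∈ supp
  root_unique : ∀ v ∈ supp, ∀ w ∈ supp, parent v = none → parent w = none → v = w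
  reaches_root : ∀ v ∈ supp, ∃ r ∈ supp, parent r = none ∧
    Relation.ReflTransGen (fun a b => parent a = some b) v r

namespace RTree

variable {V : Type}

/-- `T.Anc a v` : `a` is an ancestor of `v` in `T` (possibly `a = v`). -/
def Anc (T : RTree V) (a v : V) : Prop :=
  Relation.ReflTransGen (fun x y => T.parent x = some y) v a

/-- `a` is a strict ancestor of `v`. -/
def StrictAnc (T : RTree V) (a v : V) : Prop := a ≠ v ∧ T.Anc a v

/-- The set of vertices of the subtree rooted at `a` (the descendants of `a`). -/
def descSet (T : RTree V) (a : V) : Set V := {v | T.Anc a v}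

/-- The depth of a node: the number of nodes on the path from the root to it
(the root has depth 1). -/
noncomputable def depth (T : RTree V) (v : V) : ℕ := Set.ncard {a | T.Anc a v}

def IsRoot (T : RTree V) (r : V) : Prop := r ∈ T.supp ∧ T.parent r = none

end RTree

/-- The restriction of a graph to a set of vertices (keeping the ambient vertex type). -/
def restrictG {V : Type} (G : SimpleGraph V) (U : Set V) : SimpleGraph V where
  Adj a b := G.Adj a b ∧ a ∈ U ∧ b ∈ U
  symm := ⟨fun a b ⟨h, ha, hb⟩ => ⟨h.symm, hb, ha⟩⟩
  loopless := ⟨fun a ⟨h, _, _⟩ => G.ne_of_adj h rfl⟩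

/-- `T` is a search tree on the induced subgraph `G[U]`: its nodes are the vertices of `U`,
the subtree of every node induces a connected subgraph, and every edge of `G[U]` joins
two comparable nodes of `T`. -/
def IsSTGOn {V : Type} (G : SimpleGraph V) (U : Finset V) (T : RTree V) : Prop :=
  T.supp = U ∧
  (∀ v ∈ U, ((restrictG G ↑U).induce (T.descSet v)).Connected) ∧
  (∀ u v : V, u ∈ U → v ∈ U → G.Adj u v → T.Anc u v ∨ T.Anc v u)

/-- `T` is a search tree on the graph `G`. -/
def IsSTG {V : Type} [Fintype V] (G : SimpleGraph V) (T : RTree V) : Prop :=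
  IsSTGOn G Finset.univ T

/-- `T'` is obtained from `T` by rotating the edge `(p, c)` of `T`, where `p` is
the parent of `c`: `c` replaces `p` (becoming a child of `p`'s former parent, or the
root if `p` was the root), `p` becomes a child of `c`, `p` keeps its other children,
and each child `x` of `c` whose subtree contains a vertex of `G` adjacent to `p`
becomes a child of `p` (the other children of `c` stay children of `c`). -/
def IsRotationAt {V : Type} (G : SimpleGraph V) (T T' : RTree V) (p c : V) : Prop :=
  T.parent c = some p ∧
  T'.supp = T.supp ∧
  T'.parent c = T.parent p ∧
  T'.parent p = some c ∧
  (∀ x : V, x ≠ p → T.parent x = some c →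
    ((∃ u ∈ T.descSet x, G.Adj u p) → T'.parent x = some p) ∧
    (¬(∃ u ∈ T.descSet x, G.Adj u p) → T'.parent x = some c)) ∧
  (∀ x : V, x ≠ c → x ≠ p → T.parent x ≠ some c → T'.parent x = T.parent x)

/-- `T'` is obtained from `T` by a single rotation. -/
def IsRotation {V : Type} (G : SimpleGraph V) (T T' : RTree V) : Prop :=
  ∃ p c, IsRotationAt G T T' p c

/-- `T2` can be obtained from `T1` by exactly `k` rotations. -/
def ReachesIn {V : Type} (G : SimpleGraph V) : ℕ → RTree V → RTree V → Prop
  | 0, T1, T2 => T1 = T2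
  | k+1, T1, T2 => ∃ T', IsRotation G T1 T' ∧ ReachesIn G k T' T2

/-- Vertex type of the caterpillar `C(m_1, …, m_n)`: spine vertices `inl i` and
leg vertices `inr ⟨i, j⟩`. -/
abbrev CatV (n : ℕ) (m : Fin n → ℕ) : Type := Fin n ⊕ (Σ i : Fin n, Fin (m i))

/-- The caterpillar tree `C(m_1, …, m_n)`: the spine `s_1 - s_2 - ⋯ - s_n` is a path,
and leg `ℓ_{i,j}` is adjacent to `s_i`. -/
def caterpillar (n : ℕ) (m : Fin n → ℕ) : SimpleGraph (CatV n m) where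
  Adj x y :=
    match x, y with
    | Sum.inl i, Sum.inl j => i.val + 1 = j.val ∨ j.val + 1 = i.val
    | Sum.inl i, Sum.inr l => l.1 = i
    | Sum.inr l, Sum.inl i => l.1 = i
    | Sum.inr _, Sum.inr _ => False
  symm := ⟨by rintro (i | l) (j | l') h <;> simp_all <;> tauto⟩
  loopless := ⟨by rintro (i | l) h <;> simp_all⟩

/-- The (base 2) Shannon entropy `H(m_1, …, m_n) = ∑_{i : m_i > 0} (m_i/m) log (m/m_i)`. -/
noncomputable def shannonH {n : ℕ} (m : Fin n → ℕ) : ℝ :=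
  ∑ i, if 0 < m i then
    ((m i : ℝ) / (∑ j, (m j : ℝ))) * Real.logb 2 ((∑ j, (m j : ℝ)) / (m i : ℝ))
  else 0

/-- The parent function of the search tree `A(S, π)` on the caterpillar: the legs form a
path at the top of the tree, ordered bottom-to-top according to `π`, and the spine nodes
hang below, arranged according to the BST `S`. -/
def AParent {n : ℕ} {m : Fin n → ℕ} (S : RTree (Fin n))
    (π : Fin (∑ i, m i) ≃ (Σ i : Fin n, Fin (m i))) :
    CatV n m → Option (CatV n m) :=
  fun x => match x with
  | Sum.inl i =>
      match S.parent i with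
      | some j => some (Sum.inl j)
      | none => if h : 0 < ∑ i, m i then some (Sum.inr (π ⟨0, h⟩)) else none
  | Sum.inr l =>
      if h : (π.symm l).val + 1 < ∑ i, m i then
        some (Sum.inr (π ⟨(π.symm l).val + 1, h⟩))
      else none

/-- `T = A(S, π)`. -/
def IsA {n : ℕ} {m : Fin n → ℕ} (S : RTree (Fin n))
    (π : Fin (∑ i, m i) ≃ (Σ i : Fin n, Fin (m i))) (T : RTree (CatV n m)) : Prop :=
  T.supp = Finset.univ ∧ T.parent = AParent S π

/-- The parent function of the search tree `B(S)` on the caterpillar: every leg `ℓ_{i,j}`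
is a (childless) child of `s_i`, and the spine nodes are arranged according to `S`. -/
def BParent {n : ℕ} {m : Fin n → ℕ} (S : RTree (Fin n)) :
    CatV n m → Option (CatV n m) :=
  fun x => match x with
  | Sum.inl i => (S.parent i).map Sum.inl
  | Sum.inr l => some (Sum.inl l.1)

/-- `T = B(S)`. -/
def IsB {n : ℕ} {m : Fin n → ℕ} (S : RTree (Fin n)) (T : RTree (CatV n m)) : Prop :=
  T.supp = Finset.univ ∧ T.parent = BParent S

/-- `σ(π)`: the sequence of spine indices obtained from the leg ordering `π` by replacing
each leg `ℓ_{i,j}` with `i`. -/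
def sigmaOf {n : ℕ} {m : Fin n → ℕ}
    (π : Fin (∑ i, m i) ≃ (Σ i : Fin n, Fin (m i))) : List (Fin n) :=
  List.ofFn (fun j => (π j).1)

/-- Every leg node of `T` is bound, i.e. no leg node has a child. -/
def noFreeLegs {n : ℕ} {m : Fin n → ℕ} (T : RTree (CatV n m)) : Prop :=
  ∀ (x : CatV n m) (l : Σ i : Fin n, Fin (m i)), T.parent x ≠ some (Sum.inr l)

open Classical in
/-- The number of adjacent pairs in a list satisfying `P`. -/
noncomputable def pairAlt {α : Type} (P : α → α → Prop) : List α → ℕ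
  | [] => 0
  | [_] => 0
  | a :: b :: t => (if P a b then 1 else 0) + pairAlt P (b :: t)

open Classical in
/-- Wilber's quantity `λ(S, u, σ)`: 0 if `u` has at most one child; otherwise the number
of adjacent pairs in the restriction of `σ` to the subtree of `u` that do not both lie in
the subtree of one child of `u` and are not both equal to `u`. -/
noncomputable def wilberLam {n : ℕ} (S : RTree (Fin n)) (u : Fin n) (σ : List (Fin n)) : ℕ :=
  if (∃ v w : Fin n, v ≠ w ∧ S.parent v = some u ∧ S.parent w = some u) then
    pairAlt (fun x y =>
      ¬((x = u ∧ y = u) ∨ ∃ ch, S.parent ch = some u ∧ S.Anc ch x ∧ S.Anc ch y))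
      (σ.filter (fun x => decide (S.Anc u x)))
  else 0

/-- `λ'(S, u, σ) = λ(S, u, σ)` plus the number of occurrences of `u` in `σ`. -/
noncomputable def wilberLam' {n : ℕ} (S : RTree (Fin n)) (u : Fin n)
    (σ : List (Fin n)) : ℕ :=
  wilberLam S u σ + σ.count u

/-- Wilber's first lower bound `Λ'(S, σ) = ∑_u λ'(S, u, σ)`. -/
noncomputable def wilberL' {n : ℕ} (S : RTree (Fin n)) (σ : List (Fin n)) : ℕ :=
  ∑ u : Fin n, wilberLam' S u σ

/-- `P` is the projection `T[U]` of `T` onto `U`: its nodes are the nodes of `T` in `U`,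
and the parent of `u` in `P` is the nearest strict ancestor of `u` in `T` that lies
in `U` (which is exactly the result of pruning the vertices outside `U` one by one). -/
def IsProjOn {V : Type} [DecidableEq V] (T : RTree V) (U : Finset V) (P : RTree V) : Prop :=
  P.supp = T.supp ∩ U ∧
  ∀ u w : V, P.parent u = some w ↔
    (u ∈ U ∧ w ∈ U ∧ T.StrictAnc w u ∧ ∀ z ∈ U, T.StrictAnc z u → T.Anc z w)

/-- `P` is obtained from `T` by pruning the vertex `v`. -/
def IsPruneOf {V : Type} [DecidableEq V] (T : RTree V) (v : V) (P : RTree V) : Prop :=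
  IsProjOn T (T.supp.erase v) P

/-- `PruneSeq T l P`: `P` is obtained from `T` by successively pruning the
vertices in the list `l`, in order. -/
def PruneSeq {V : Type} [DecidableEq V] : RTree V → List V → RTree V → Prop
  | T, [], P => P = T
  | T, v :: rest, P => ∃ P', IsPruneOf T v P' ∧ PruneSeq P' rest P

/-- The number of alternations (edges whose endpoints get different colors under `f`)
on the path from the root to `z`. -/
noncomputable def altAt {V K : Type} (f : V → K) (T : RTree V) (z : V) : ℕ :=
  Set.ncard {x | T.Anc x z ∧ ∃ y, T.parent x = some y ∧ f x ≠ f y}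

/-- The alternation number of `T` w.r.t. the coloring `f`: the maximum number of
alternations on a root-to-node path. -/
noncomputable def altNum {V K : Type} (f : V → K) (T : RTree V) : ℕ :=
  T.supp.sup (fun z => altAt f T z)

/-!
Let `S` be a weight-balanced search tree on `[n]`: at every node `u`, whose two subtrees carry
total weights `a` and `b`, we have `|a - b| ≤ m_u`. Build `σ` bottom-up: the sequence of the
subtree of `u` interleaves the sequences of its two subtrees, the lighter one padded with the
`m_u` copies of `u`. Restricted to the subtree of `u`, consecutive entries of `σ` then alternate
between the two sides, so `λ(S, u, σ) ≥ a + b - 1` whenever `u` has two children.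
By the chain rule, `m · H` is the sum over the nodes `u` of the entropy of the split
`(a, b, m_u)`, which is at most `2 (a + b + m_u)` bits; the balance condition turns this into
at most `4 (λ(S, u, σ) + m_u)`, and summing over `u` gives `m · H ≤ 4 Λ'(S, σ)`.
-/

open Relation Real

theorem pairAlt_cons_cons {α : Type} (P : α → α → Prop) (a b : α) (l : List α) :
    open Classical in pairAlt P (a :: b :: l) = (if P a b then 1 else 0) + pairAlt P (b :: l) :=
  rfl

namespace List

variable {α : Type}

theorem filter_interleave (p : α → Bool) {l₁ l₂ : List α}
    (h : l₁.filter p = [] ∨ l₂.filter p = []) :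
    (l₁.interleave l₂).filter p = l₁.filter p ++ l₂.filter p := by
  induction l₁, l₂ using interleave.induct with
  | case1 l₂ => simp
  | case2 a l₁ l₂ ih =>
    by_cases ha : p a
    · have h₂ : l₂.filter p = [] := by simpa [filter_cons, ha] using h
      simp [ha, ih (.inl h₂), h₂]
    · have h' : l₂.filter p = [] ∨ l₁.filter p = [] := by
        simpa [filter_cons, ha, or_comm] using h
      rcases h' with h' | h' <;> simp [ha, ih (by simp [h']), h']

theorem min_length_le_pairAlt_interleave_add_one (P : α → α → Prop) {l₁ l₂ : List α}
    (h : ∀ x ∈ l₁, ∀ y ∈ l₂, P x y ∧ P y x) :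
    min (2 * l₁.length) (2 * l₂.length + 1) ≤ pairAlt P (l₁.interleave l₂) + 1 := by
  induction l₁, l₂ using interleave.induct with
  | case1 l₂ => simp
  | case2 a l₁ l₂ ih =>
    rcases l₂ with _ | ⟨b, l₂⟩
    · simp
    have hab : P a b := (h a mem_cons_self b mem_cons_self).1
    have ih' := ih fun y hy x hx => (h x (mem_cons_of_mem a hx) y hy).symm
    rw [cons_interleave, cons_interleave, pairAlt_cons_cons, if_pos hab, ← cons_interleave]
    simp only [length_cons] at ih' ⊢
    omega

theorem ordConnected_of_infix [LinearOrder α] {L M : List α}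
    (hL : L.Pairwise (· < ·)) (hLc : {x | x ∈ L}.OrdConnected) (hM : M <:+: L) :
    {x | x ∈ M}.OrdConnected := by
  obtain ⟨s, u, rfl⟩ := hM
  refine ⟨fun x (hx : x ∈ M) z (hz : z ∈ M) y hy => ?_⟩
  have hyL : y ∈ s ++ M ++ u := hLc.out (by simp [hx]) (by simp [hz]) hy
  simp only [pairwise_append, mem_append] at hL hyL
  rcases hyL with (hys | hyM) | hyu
  · exact absurd (hL.1.2.2 y hys x hx) (not_lt.2 hy.1)
  · exact hyM
  · exact absurd (hL.2.2 z (.inr hz) y hyu) (not_lt.2 hy.2)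

theorem exists_balanced_split (w : α → ℕ) :
    ∀ (l₁ : List α) (k : α) (l₂ : List α), (l₁.map w).sum ≤ (l₂.map w).sum + w k →
      ∃ l₁' k' l₂', l₁ ++ k :: l₂ = l₁' ++ k' :: l₂' ∧
        (l₁'.map w).sum ≤ (l₂'.map w).sum + w k' ∧
        (l₂'.map w).sum ≤ (l₁'.map w).sum + w k'
  | l₁, k, [], h => ⟨l₁, k, [], rfl, h, by simp⟩
  | l₁, k, k' :: l₂, h => by
    by_cases h' : ((k' :: l₂).map w).sum ≤ (l₁.map w).sum + w k
    · exact ⟨l₁, k, k' :: l₂, rfl, h, h'⟩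
    obtain ⟨l₁', k'', l₂', he, h₁, h₂⟩ :=
      exists_balanced_split w (l₁ ++ [k]) k' l₂ (by simp at h' ⊢; omega)
    exact ⟨l₁', k'', l₂', by simpa using he, h₁, h₂⟩

end List

theorem restrictG_univ {V : Type} [Fintype V] (G : SimpleGraph V) :
    restrictG G ↑(Finset.univ : Finset V) = G := by
  ext a b
  simp [restrictG]

theorem SimpleGraph.connected_induce_pathGraph {n : ℕ} {A : Set (Fin n)} (hA : A.OrdConnected)
    (hne : A.Nonempty) : ((pathGraph n).induce A).Connected := by
  have reach : ∀ {x y : Fin n} (hx : x ∈ A) (hy : y ∈ A), x ≤ y →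
      ((pathGraph n).induce A).Reachable ⟨x, hx⟩ ⟨y, hy⟩ := by
    intro x y hx hy hxy
    suffices h : ∀ z, x ≤ z → z ≤ y → ∃ hz : z ∈ A,
        ((pathGraph n).induce A).Reachable ⟨x, hx⟩ ⟨z, hz⟩ from (h y hxy le_rfl).2
    refine fun z hxz => Succ.rec (P := fun z _ => z ≤ y → ∃ hz : z ∈ A,
        ((pathGraph n).induce A).Reachable ⟨x, hx⟩ ⟨z, hz⟩) (fun _ => ⟨hx, .rfl⟩) ?_ hxz
    intro z hxz ih hzy
    by_cases hmax : IsMax z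
    · rw [hmax.succ_eq] at hzy ⊢
      exact ih hzy
    have hcov := Order.covBy_succ_of_not_isMax hmax
    obtain ⟨hz, hr⟩ := ih (hcov.le.trans hzy)
    exact ⟨hA.out hx hy ⟨hxz.trans hcov.le, hzy⟩, hr.trans (Adj.reachable (.inl hcov))⟩
  rw [connected_iff]
  refine ⟨fun a b => ?_, hne.to_subtype⟩
  rcases le_total a.1 b.1 with hab | hba
  · exact reach a.2 b.2 hab
  · exact (reach b.2 a.2 hba).symm

namespace Real

theorem negMulLog_add_mul_log_le {p W : ℝ} (hp : 0 ≤ p) (hpW : p ≤ W) :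
    negMulLog p + p * log W ≤ p * log 4 + W / 4 - p := by
  rcases hp.eq_or_lt with rfl | hp
  · simp only [negMulLog_zero, zero_mul, add_zero, sub_zero]
    linarith
  have hW : 0 < W := hp.trans_le hpW
  have hlog := log_le_sub_one_of_pos (show 0 < W / (4 * p) by positivity)
  rw [log_div hW.ne' (by positivity), log_mul (by norm_num) hp.ne'] at hlog
  have hmul := mul_le_mul_of_nonneg_left hlog hp.le
  have e : p * (W / (4 * p) - 1) = W / 4 - p := by field_simp
  rw [negMulLog]
  linarith

theorem negMulLog_add_add_sub_le {a b c : ℝ} (ha : 0 ≤ a) (hb : 0 ≤ b) (hc : 0 ≤ c) :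
    negMulLog a + negMulLog b + negMulLog c - negMulLog (a + b + c) ≤
      2 * log 2 * (a + b + c) := by
  have h₁ := negMulLog_add_mul_log_le ha (show a ≤ a + b + c by linarith)
  have h₂ := negMulLog_add_mul_log_le hb (show b ≤ a + b + c by linarith)
  have h₃ := negMulLog_add_mul_log_le hc (show c ≤ a + b + c by linarith)
  have h₄ : log 4 = 2 * log 2 := by
    rw [show (4 : ℝ) = 2 ^ 2 by norm_num, log_pow, Nat.cast_ofNat]
  have e : negMulLog (a + b + c) =
      -(a * log (a + b + c)) - b * log (a + b + c) - c * log (a + b + c) := by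
    rw [negMulLog]
    ring
  rw [e]
  rw [h₄] at h₁ h₂ h₃
  linarith

theorem negMulLog_natCast_add_add_sub_le {a b c f : ℕ} (hab : a ≤ b + c) (hba : b ≤ a + c)
    (hf : a = 0 ∨ b = 0 ∨ a + b ≤ f + 1) :
    negMulLog a + negMulLog b + negMulLog c - negMulLog ((a : ℝ) + b + c) ≤
      4 * log 2 * (f + c) := by
  have hlog := log_pos one_lt_two
  by_cases hW : a + b + c ≤ 1
  · have h₀ : ∀ p : ℕ, p ≤ 1 → negMulLog p = 0 := by
      intro p hp
      interval_cases p <;> simp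
    rw [show (a : ℝ) + b + c = ((a + b + c : ℕ) : ℝ) by push_cast; ring, h₀ a (by omega),
      h₀ b (by omega), h₀ c (by omega), h₀ _ hW]
    norm_num
    positivity
  · have key : 2 * (a + b + c) ≤ 4 * (f + c) := by omega
    have key' : (2 : ℝ) * (a + b + c) ≤ 4 * (f + c) := by exact_mod_cast key
    calc _ ≤ 2 * log 2 * (a + b + c) := negMulLog_add_add_sub_le (by positivity) (by positivity)
            (by positivity)
      _ ≤ 4 * log 2 * (f + c) := by nlinarith

end Real

theorem sum_mul_shannonH {n : ℕ} (m : Fin n → ℕ) :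
    (∑ i, (m i : ℝ)) * shannonH m =
      (∑ i, negMulLog (m i) - negMulLog (∑ i, (m i : ℝ))) / log 2 := by
  have hsum : ∑ i, negMulLog (m i) - negMulLog (∑ i, (m i : ℝ)) =
      ∑ i, (negMulLog (m i) + m i * log (∑ j, (m j : ℝ))) := by
    rw [Finset.sum_add_distrib, ← Finset.sum_mul, negMulLog]
    ring
  rw [shannonH, Finset.mul_sum, hsum, Finset.sum_div]
  refine Finset.sum_congr rfl fun i _ => ?_
  split_ifs with hi
  · have hi' : (0 : ℝ) < m i := by exact_mod_cast hi
    have hM : (0 : ℝ) < ∑ j, (m j : ℝ) :=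
      hi'.trans_le (Finset.single_le_sum (fun j _ => Nat.cast_nonneg (m j)) (Finset.mem_univ i))
    rw [logb, log_div hM.ne' hi'.ne', negMulLog]
    field_simp
    ring
  · simp [show m i = 0 by omega]

namespace BinaryTree

variable {α : Type}

def inorder : BinaryTree α → List α
  | nil => []
  | node k l r => l.inorder ++ k :: r.inorder

def weight (w : α → ℕ) (t : BinaryTree α) : ℕ := (t.inorder.map w).sum

theorem weight_node (w : α → ℕ) (k : α) (l r : BinaryTree α) :
    (node k l r).weight w = l.weight w + w k + r.weight w := by
  simp [weight, inorder, Nat.add_assoc]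

inductive IsSubtree : BinaryTree α → BinaryTree α → Prop
  | refl (t : BinaryTree α) : IsSubtree t t
  | left {s l r : BinaryTree α} (k : α) : IsSubtree s l → IsSubtree s (node k l r)
  | right {s l r : BinaryTree α} (k : α) : IsSubtree s r → IsSubtree s (node k l r)

namespace IsSubtree

theorem trans {s t u : BinaryTree α} (hst : IsSubtree s t) (htu : IsSubtree t u) :
    IsSubtree s u := by
  induction htu with
  | refl => exact hst
  | left k _ ih => exact .left k ih
  | right k _ ih => exact .right k ih

theorem inorder_infix {s t : BinaryTree α} (h : IsSubtree s t) : s.inorder <:+: t.inorder := by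
  induction h with
  | refl => exact List.infix_refl _
  | left k _ ih => exact ih.trans (List.prefix_append _ _).isInfix
  | right k _ ih =>
    exact ih.trans ((List.suffix_cons _ _).trans (List.suffix_append _ _)).isInfix

theorem nodup {s t : BinaryTree α} (h : IsSubtree s t) (ht : t.inorder.Nodup) :
    s.inorder.Nodup :=
  ht.sublist h.inorder_infix.sublist

end IsSubtree

theorem exists_isSubtree_of_mem {x : α} :
    ∀ {t : BinaryTree α}, x ∈ t.inorder → ∃ l r, IsSubtree (node x l r) t
  | nil, h => by simp [inorder] at h
  | node k l r, h => by
    simp only [inorder, List.mem_append, List.mem_cons] at h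
    rcases h with h | rfl | h
    · obtain ⟨l', r', hs⟩ := exists_isSubtree_of_mem h
      exact ⟨l', r', .left k hs⟩
    · exact ⟨l, r, .refl _⟩
    · obtain ⟨l', r', hs⟩ := exists_isSubtree_of_mem h
      exact ⟨l', r', .right k hs⟩

theorem nodup_node {k : α} {l r : BinaryTree α} (h : (node k l r).inorder.Nodup) :
    l.inorder.Nodup ∧ r.inorder.Nodup ∧ k ∉ l.inorder ∧ k ∉ r.inorder ∧
      ∀ a ∈ l.inorder, a ∉ r.inorder := by
  simp only [inorder, List.nodup_append, List.nodup_cons, List.mem_cons] at h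
  exact ⟨h.1, h.2.1.2, fun hk => h.2.2 k hk k (.inl rfl) rfl,
    h.2.1.1, fun a ha har => h.2.2 a ha a (.inr har) rfl⟩

section

variable (w : α → ℕ)

def Balanced : BinaryTree α → Prop
  | nil => True
  | node k l r =>
    l.weight w ≤ r.weight w + w k ∧ r.weight w ≤ l.weight w + w k ∧
      l.Balanced ∧ r.Balanced

theorem IsSubtree.balanced {s t : BinaryTree α} (hs : IsSubtree s t) (ht : t.Balanced w) :
    s.Balanced w := by
  induction hs with
  | refl => exact ht
  | left k _ ih => exact ih ht.2.2.1
  | right k _ ih => exact ih ht.2.2.2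

theorem exists_inorder_eq_balanced (L : List α) :
    ∃ t : BinaryTree α, t.inorder = L ∧ t.Balanced w := by
  induction hN : L.length using Nat.strong_induction_on generalizing L with
  | _ N ih =>
    rcases L with _ | ⟨x, xs⟩
    · exact ⟨nil, rfl, trivial⟩
    obtain ⟨l₁, k, l₂, hL, h₁, h₂⟩ := List.exists_balanced_split w [] x xs (by simp)
    rw [List.nil_append] at hL
    obtain ⟨t₁, rfl, hb₁⟩ := ih l₁.length (by simp [← hN, hL]) l₁ rfl
    obtain ⟨t₂, rfl, hb₂⟩ := ih l₂.length (by simp [← hN, hL]; omega) l₂ rfl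
    exact ⟨node k t₁ t₂, by simp [inorder, hL], h₁, h₂, hb₁, hb₂⟩

/-- `t.weight w` times the Shannon entropy, in nats, of the weights `w` on the keys of `t`. -/
noncomputable def entropy (t : BinaryTree α) : ℝ :=
  (t.inorder.map fun x => negMulLog (w x)).sum - negMulLog (t.weight w)

theorem entropy_node (k : α) (l r : BinaryTree α) :
    (node k l r).entropy w = l.entropy w + r.entropy w +
      (negMulLog (l.weight w) + negMulLog (r.weight w) + negMulLog (w k) -
        negMulLog ((l.weight w : ℝ) + r.weight w + w k)) := by
  simp only [entropy, inorder, List.map_append, List.map_cons, List.sum_append, List.sum_cons,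
    weight_node]
  push_cast
  ring_nf

theorem entropy_le_of_balanced (f : α → ℕ) :
    ∀ {t : BinaryTree α}, t.Balanced w →
      (∀ k l r, IsSubtree (node k l r) t → l ≠ nil → r ≠ nil →
        l.weight w + r.weight w ≤ f k + 1) →
      t.entropy w ≤ 4 * log 2 * (t.weight f + t.weight w)
  | nil, _, _ => by simp [entropy, inorder, weight]
  | node k l r, ⟨hlr, hrl, hl, hr⟩, hf => by
    have ihl := entropy_le_of_balanced f hl fun k' l' r' hs => hf k' l' r' (.left k hs)
    have ihr := entropy_le_of_balanced f hr fun k' l' r' hs => hf k' l' r' (.right k hs)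
    have hloc := negMulLog_natCast_add_add_sub_le (f := f k) hlr hrl (by
      by_cases hl₀ : l = nil
      · exact .inl (by simp [hl₀, weight, inorder])
      by_cases hr₀ : r = nil
      · exact .inr (.inl (by simp [hr₀, weight, inorder]))
      exact .inr (.inr (hf k l r (.refl _) hl₀ hr₀)))
    rw [entropy_node, weight_node, weight_node]
    push_cast
    linarith

/-- The copies of `k` pad the lighter side, so that in a balanced tree the two interleaved lists
have nearly equal lengths. -/
def accessSeq : BinaryTree α → List α
  | nil => []
  | node k l r =>
    if l.weight w ≤ r.weight w then
      (l.accessSeq ++ List.replicate (w k) k).interleave r.accessSeq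
    else l.accessSeq.interleave (r.accessSeq ++ List.replicate (w k) k)

theorem accessSeq_perm :
    ∀ t : BinaryTree α, (t.accessSeq w).Perm (t.inorder.flatMap fun x => List.replicate (w x) x)
  | nil => by simp [accessSeq, inorder]
  | node k l r => by
    have h : ((node k l r).accessSeq w).Perm
        (l.accessSeq w ++ (List.replicate (w k) k ++ r.accessSeq w)) := by
      rw [accessSeq]
      split_ifs
      · exact List.interleave_perm_append.trans (.of_eq (List.append_assoc ..))
      · exact List.interleave_perm_append.trans (List.perm_append_comm.append_left _)
    simpa [inorder] using h.trans ((accessSeq_perm l).append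
      ((List.Perm.refl _).append (accessSeq_perm r)))

theorem length_accessSeq (t : BinaryTree α) : (t.accessSeq w).length = t.weight w := by
  rw [(accessSeq_perm w t).length_eq, List.length_flatMap]
  simp [weight]

theorem mem_inorder_of_mem_accessSeq {t : BinaryTree α} {x : α} (h : x ∈ t.accessSeq w) :
    x ∈ t.inorder := by
  have := (accessSeq_perm w t).mem_iff.1 h
  simp only [List.mem_flatMap, List.mem_replicate] at this
  obtain ⟨y, hy, -, rfl⟩ := this
  exact hy

end

variable [DecidableEq α]

def parentOf : BinaryTree α → α → Option α
  | nil, _ => none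
  | node k l r, x =>
    if x ∈ l.inorder then some ((l.parentOf x).getD k)
    else if x ∈ r.inorder then some ((r.parentOf x).getD k)
    else none

def Anc (t : BinaryTree α) (u x : α) : Prop :=
  ReflTransGen (fun a b => t.parentOf a = some b) x u

theorem mem_of_parentOf_eq_some {a b : α} :
    ∀ {t : BinaryTree α}, t.parentOf a = some b → a ∈ t.inorder ∧ b ∈ t.inorder
  | nil, h => by simp [parentOf] at h
  | node k l r, h => by
    unfold parentOf at h
    split_ifs at h with hl hr <;> simp only [Option.some.injEq] at h <;> subst h
    · cases hp : l.parentOf a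
      · simp [inorder, hl]
      · simp [inorder, hl, (mem_of_parentOf_eq_some hp).2]
    · cases hp : r.parentOf a
      · simp [inorder, hr]
      · simp [inorder, hr, (mem_of_parentOf_eq_some hp).2]

theorem parentOf_eq_none_of_not_mem {a : α} :
    ∀ {t : BinaryTree α}, a ∉ t.inorder → t.parentOf a = none
  | nil, _ => rfl
  | node k l r, h => by
    simp only [inorder, List.mem_append, List.mem_cons, not_or] at h
    simp [parentOf, h.1, h.2.2]

theorem parentOf_node_self {k : α} {l r : BinaryTree α} (h : (node k l r).inorder.Nodup) :
    (node k l r).parentOf k = none := by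
  obtain ⟨-, -, hkl, hkr, -⟩ := nodup_node h
  simp [parentOf, hkl, hkr]

theorem eq_of_parentOf_eq_none {a k : α} {l r : BinaryTree α} (ha : a ∈ (node k l r).inorder)
    (h : (node k l r).parentOf a = none) : a = k := by
  simp only [inorder, List.mem_append, List.mem_cons] at ha
  unfold parentOf at h
  split_ifs at h with hl hr
  tauto

theorem parentOf_node_of_mem_left {a k : α} {l r : BinaryTree α} (ha : a ∈ l.inorder) :
    (node k l r).parentOf a = some ((l.parentOf a).getD k) := by
  simp [parentOf, ha]

theorem parentOf_node_of_mem_right {a k : α} {l r : BinaryTree α}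
    (h : (node k l r).inorder.Nodup) (ha : a ∈ r.inorder) :
    (node k l r).parentOf a = some ((r.parentOf a).getD k) := by
  obtain ⟨-, -, -, -, hlr⟩ := nodup_node h
  have hal : a ∉ l.inorder := fun hal => hlr a hal ha
  simp [parentOf, ha, hal]

theorem getD_parentOf_mem (t : BinaryTree α) (a k : α) :
    (t.parentOf a).getD k = k ∨ (t.parentOf a).getD k ∈ t.inorder := by
  cases hp : t.parentOf a
  · exact .inl rfl
  · exact .inr (mem_of_parentOf_eq_some hp).2

theorem parentOf_node_eq_some_iff_left {a b k : α} {l r : BinaryTree α}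
    (h : (node k l r).inorder.Nodup) (hb : b ∈ l.inorder) :
    (node k l r).parentOf a = some b ↔ l.parentOf a = some b := by
  obtain ⟨-, -, hkl, -, hlr⟩ := nodup_node h
  constructor
  · intro hab
    have ha := (mem_of_parentOf_eq_some hab).1
    simp only [inorder, List.mem_append, List.mem_cons] at ha
    rcases ha with ha | rfl | ha
    · rw [parentOf_node_of_mem_left ha, Option.some_inj] at hab
      cases hp : l.parentOf a <;> simp_all
    · simp [parentOf_node_self h] at hab
    · rw [parentOf_node_of_mem_right h ha, Option.some_inj] at hab
      rcases getD_parentOf_mem r a k with hk | hk <;> rw [hab] at hk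
      · exact absurd (hk ▸ hb) hkl
      · exact absurd hk (hlr b hb)
  · intro hab
    rw [parentOf_node_of_mem_left (mem_of_parentOf_eq_some hab).1, hab]
    rfl

theorem parentOf_node_eq_some_iff_right {a b k : α} {l r : BinaryTree α}
    (h : (node k l r).inorder.Nodup) (hb : b ∈ r.inorder) :
    (node k l r).parentOf a = some b ↔ r.parentOf a = some b := by
  obtain ⟨-, -, -, hkr, hlr⟩ := nodup_node h
  constructor
  · intro hab
    have ha := (mem_of_parentOf_eq_some hab).1
    simp only [inorder, List.mem_append, List.mem_cons] at ha
    rcases ha with ha | rfl | ha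
    · rw [parentOf_node_of_mem_left ha, Option.some_inj] at hab
      rcases getD_parentOf_mem l a k with hk | hk <;> rw [hab] at hk
      · exact absurd (hk ▸ hb) hkr
      · exact absurd hb (hlr b hk)
    · simp [parentOf_node_self h] at hab
    · rw [parentOf_node_of_mem_right h ha, Option.some_inj] at hab
      cases hp : r.parentOf a <;> simp_all
  · intro hab
    rw [parentOf_node_of_mem_right h (mem_of_parentOf_eq_some hab).1, hab]
    rfl

theorem IsSubtree.parentOf_eq_some_iff {s t : BinaryTree α} (hs : IsSubtree s t)
    (ht : t.inorder.Nodup) {a b : α} (hb : b ∈ s.inorder) :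
    t.parentOf a = some b ↔ s.parentOf a = some b := by
  induction hs with
  | refl => rfl
  | left k hs ih =>
    rw [parentOf_node_eq_some_iff_left ht (hs.inorder_infix.subset hb), ih (nodup_node ht).1]
  | right k hs ih =>
    rw [parentOf_node_eq_some_iff_right ht (hs.inorder_infix.subset hb),
      ih (nodup_node ht).2.1]

theorem IsSubtree.anc_iff {s t : BinaryTree α} (hs : IsSubtree s t) (ht : t.inorder.Nodup)
    {u x : α} (hu : u ∈ s.inorder) : t.Anc u x ↔ s.Anc u x := by
  constructor
  · intro h
    induction h with
    | refl => exact .refl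
    | tail _ hbu ih =>
      have hbu' := (hs.parentOf_eq_some_iff ht hu).1 hbu
      exact (ih (mem_of_parentOf_eq_some hbu').1).tail hbu'
  · exact ReflTransGen.mono (fun a b hab =>
      (hs.parentOf_eq_some_iff ht (mem_of_parentOf_eq_some hab).2).2 hab) _ _

theorem mem_of_anc {t : BinaryTree α} {u x : α} (hu : u ∈ t.inorder) (h : t.Anc u x) :
    x ∈ t.inorder := by
  rcases h.cases_head with rfl | ⟨c, hxc, -⟩
  · exact hu
  · exact (mem_of_parentOf_eq_some hxc).1

theorem IsSubtree.mem_of_anc {s t : BinaryTree α} (hs : IsSubtree s t) (ht : t.inorder.Nodup)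
    {u x : α} (hu : u ∈ s.inorder) (h : t.Anc u x) : x ∈ s.inorder :=
  BinaryTree.mem_of_anc hu ((hs.anc_iff ht hu).1 h)

theorem IsSubtree.anc {s t : BinaryTree α} (hs : IsSubtree s t) (ht : t.inorder.Nodup)
    {u x : α} (h : s.Anc u x) : t.Anc u x := by
  rcases h.cases_tail with rfl | ⟨c, -, hcu⟩
  · exact .refl
  · exact (hs.anc_iff ht (mem_of_parentOf_eq_some hcu).2).2 h

theorem parentOf_node_of_root_left {k c : α} {l' r' r : BinaryTree α}
    (h : (node k (node c l' r') r).inorder.Nodup) :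
    (node k (node c l' r') r).parentOf c = some k := by
  rw [parentOf_node_of_mem_left (by simp [inorder]), parentOf_node_self (nodup_node h).1]
  rfl

theorem parentOf_node_of_root_right {k c : α} {l l' r' : BinaryTree α}
    (h : (node k l (node c l' r')).inorder.Nodup) :
    (node k l (node c l' r')).parentOf c = some k := by
  rw [parentOf_node_of_mem_right h (by simp [inorder]),
    parentOf_node_self (nodup_node h).2.1]
  rfl

theorem anc_of_parentOf_eq_none {k x : α} :
    ∀ {t : BinaryTree α}, t.inorder.Nodup → k ∈ t.inorder → t.parentOf k = none →
      x ∈ t.inorder → t.Anc k x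
  | nil, _, hk, _, _ => by simp [inorder] at hk
  | node k' l r, ht, hk, hroot, hx => by
    obtain rfl := eq_of_parentOf_eq_none hk hroot
    simp only [inorder, List.mem_append, List.mem_cons] at hx
    rcases hx with hx | rfl | hx
    · cases l with
      | nil => simp [inorder] at hx
      | node c l' r' =>
        have hl := (nodup_node ht).1
        refine ReflTransGen.tail ?_ (parentOf_node_of_root_left ht)
        exact (IsSubtree.left k (.refl _)).anc ht
          (anc_of_parentOf_eq_none hl (by simp [inorder]) (parentOf_node_self hl) hx)
    · exact .refl
    · cases r with
      | nil => simp [inorder] at hx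
      | node c l' r' =>
        have hr := (nodup_node ht).2.1
        refine ReflTransGen.tail ?_ (parentOf_node_of_root_right ht)
        exact (IsSubtree.right k (.refl _)).anc ht
          (anc_of_parentOf_eq_none hr (by simp [inorder]) (parentOf_node_self hr) hx)

theorem anc_node_of_mem {k x : α} {l r : BinaryTree α} (h : (node k l r).inorder.Nodup)
    (hx : x ∈ (node k l r).inorder) : (node k l r).Anc k x :=
  anc_of_parentOf_eq_none h (by simp [inorder]) (parentOf_node_self h) hx

theorem IsSubtree.anc_iff_mem {k x : α} {l r t : BinaryTree α} (hs : IsSubtree (node k l r) t)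
    (ht : t.inorder.Nodup) : t.Anc k x ↔ x ∈ (node k l r).inorder := by
  have hk : k ∈ (node k l r).inorder := by simp [inorder]
  rw [hs.anc_iff ht hk]
  exact ⟨BinaryTree.mem_of_anc hk, anc_node_of_mem (hs.nodup ht)⟩

def toRTree (t : BinaryTree α) (ht : t.inorder.Nodup) : RTree α where
  supp := t.inorder.toFinset
  parent := t.parentOf
  parent_eq_none _ hv := parentOf_eq_none_of_not_mem (by simpa using hv)
  mem_of_parent h := by simpa using mem_of_parentOf_eq_some h
  root_unique := by
    cases t with
    | nil => simp [inorder]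
    | node k l r =>
      intro v hv w hw hv' hw'
      rw [eq_of_parentOf_eq_none (by simpa using hv) hv',
        eq_of_parentOf_eq_none (by simpa using hw) hw']
  reaches_root := by
    cases t with
    | nil => simp [inorder]
    | node k l r =>
      intro v hv
      exact ⟨k, by simp [inorder], parentOf_node_self ht, anc_node_of_mem ht (by simpa using hv)⟩

theorem IsSubtree.exists_parentOf_eq_some_left {k : α} {l r t : BinaryTree α}
    (hs : IsSubtree (node k l r) t) (ht : t.inorder.Nodup) (hl : l ≠ nil) :
    ∃ c ∈ l.inorder, t.parentOf c = some k := by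
  cases l with
  | nil => exact absurd rfl hl
  | node c l' r' =>
    refine ⟨c, by simp [inorder], ?_⟩
    exact (hs.parentOf_eq_some_iff ht (by simp [inorder])).2
      (parentOf_node_of_root_left (hs.nodup ht))

theorem IsSubtree.exists_parentOf_eq_some_right {k : α} {l r t : BinaryTree α}
    (hs : IsSubtree (node k l r) t) (ht : t.inorder.Nodup) (hr : r ≠ nil) :
    ∃ c ∈ r.inorder, t.parentOf c = some k := by
  cases r with
  | nil => exact absurd rfl hr
  | node c l' r' =>
    refine ⟨c, by simp [inorder], ?_⟩
    exact (hs.parentOf_eq_some_iff ht (by simp [inorder])).2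
      (parentOf_node_of_root_right (hs.nodup ht))

theorem IsSubtree.mem_left_or_mem_right_of_parentOf_eq_some {k c : α} {l r t : BinaryTree α}
    (hs : IsSubtree (node k l r) t) (ht : t.inorder.Nodup) (h : t.parentOf c = some k) :
    c ∈ l.inorder ∨ c ∈ r.inorder := by
  have h' := (hs.parentOf_eq_some_iff ht (by simp [inorder])).1 h
  have hc := (mem_of_parentOf_eq_some h').1
  simp only [inorder, List.mem_append, List.mem_cons] at hc
  rcases hc with hc | rfl | hc
  · exact .inl hc
  · simp [parentOf_node_self (hs.nodup ht)] at h'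
  · exact .inr hc

theorem IsSubtree.both_mem_of_anc_of_parentOf_eq_some {k c x y : α} {l r t : BinaryTree α}
    (hs : IsSubtree (node k l r) t) (ht : t.inorder.Nodup) (hc : t.parentOf c = some k)
    (hx : t.Anc c x) (hy : t.Anc c y) :
    (x ∈ l.inorder ∧ y ∈ l.inorder) ∨ (x ∈ r.inorder ∧ y ∈ r.inorder) := by
  rcases hs.mem_left_or_mem_right_of_parentOf_eq_some ht hc with hc | hc
  · have hsl : IsSubtree l t := (IsSubtree.left k (.refl l)).trans hs
    exact .inl ⟨hsl.mem_of_anc ht hc hx, hsl.mem_of_anc ht hc hy⟩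
  · have hsr : IsSubtree r t := (IsSubtree.right k (.refl r)).trans hs
    exact .inr ⟨hsr.mem_of_anc ht hc hx, hsr.mem_of_anc ht hc hy⟩

section

variable (w : α → ℕ)

theorem count_accessSeq {t : BinaryTree α} (ht : t.inorder.Nodup) {x : α} (hx : x ∈ t.inorder) :
    (t.accessSeq w).count x = w x := by
  rw [(accessSeq_perm w t).count_eq, List.count_flatMap, ← List.sum_toFinset _ ht]
  simp [List.count_replicate, hx]

theorem filter_accessSeq_node_left {k : α} {l r : BinaryTree α}
    (h : (node k l r).inorder.Nodup) :
    ((node k l r).accessSeq w).filter (· ∈ l.inorder) = l.accessSeq w := by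
  obtain ⟨-, -, hkl, -, hlr⟩ := nodup_node h
  have hl : (l.accessSeq w).filter (· ∈ l.inorder) = l.accessSeq w :=
    List.filter_eq_self.2 fun x hx => by simpa using mem_inorder_of_mem_accessSeq w hx
  have hr : (r.accessSeq w).filter (· ∈ l.inorder) = [] :=
    List.filter_eq_nil_iff.2 fun x hx hxl =>
      hlr x (by simpa using hxl) (mem_inorder_of_mem_accessSeq w hx)
  have hk : (List.replicate (w k) k).filter (· ∈ l.inorder) = [] := by simp [hkl]
  rw [accessSeq]
  split_ifs
  · rw [List.filter_interleave _ (.inr hr)]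
    simp [hl, hr, hk]
  · rw [List.filter_interleave _ (.inr (by simp [hr, hk]))]
    simp [hl, hr, hk]

theorem filter_accessSeq_node_right {k : α} {l r : BinaryTree α}
    (h : (node k l r).inorder.Nodup) :
    ((node k l r).accessSeq w).filter (· ∈ r.inorder) = r.accessSeq w := by
  obtain ⟨-, -, -, hkr, hlr⟩ := nodup_node h
  have hr : (r.accessSeq w).filter (· ∈ r.inorder) = r.accessSeq w :=
    List.filter_eq_self.2 fun x hx => by simpa using mem_inorder_of_mem_accessSeq w hx
  have hl : (l.accessSeq w).filter (· ∈ r.inorder) = [] :=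
    List.filter_eq_nil_iff.2 fun x hx hxr =>
      hlr x (mem_inorder_of_mem_accessSeq w hx) (by simpa using hxr)
  have hk : (List.replicate (w k) k).filter (· ∈ r.inorder) = [] := by simp [hkr]
  rw [accessSeq]
  split_ifs
  · rw [List.filter_interleave _ (.inl (by simp [hl, hk]))]
    simp [hl, hr, hk]
  · rw [List.filter_interleave _ (.inl hl)]
    simp [hl, hr, hk]

theorem IsSubtree.filter_accessSeq {s t : BinaryTree α} (hs : IsSubtree s t)
    (ht : t.inorder.Nodup) : (t.accessSeq w).filter (· ∈ s.inorder) = s.accessSeq w := by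
  induction hs with
  | refl => exact List.filter_eq_self.2 fun x hx => by simpa using mem_inorder_of_mem_accessSeq w hx
  | @left l r k hs ih =>
    rw [← ih (nodup_node ht).1, ← filter_accessSeq_node_left w ht, List.filter_filter]
    refine List.filter_congr fun x _ => ?_
    by_cases hx : x ∈ s.inorder
    · simp [hx, hs.inorder_infix.subset hx]
    · simp [hx]
  | @right l r k hs ih =>
    rw [← ih (nodup_node ht).2.1, ← filter_accessSeq_node_right w ht, List.filter_filter]
    refine List.filter_congr fun x _ => ?_
    by_cases hx : x ∈ s.inorder
    · simp [hx, hs.inorder_infix.subset hx]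
    · simp [hx]

end

end BinaryTree

namespace BinaryTree

theorem anc_or_anc_of_covBy {α : Type} [LinearOrder α] {u v : α} (huv : u ⋖ v) :
    ∀ {t : BinaryTree α}, t.inorder.Pairwise (· < ·) → u ∈ t.inorder → v ∈ t.inorder →
      t.Anc u v ∨ t.Anc v u
  | nil, _, hu, _ => by simp [inorder] at hu
  | node k l r, ht, hu, hv => by
    have hnd := ht.nodup
    simp only [inorder, List.pairwise_append, List.pairwise_cons, List.mem_cons] at ht
    simp only [inorder, List.mem_append, List.mem_cons] at hu hv
    rcases hu with hu | rfl | hu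
    · rcases hv with hv | rfl | hv
      · exact (anc_or_anc_of_covBy huv ht.1 hu hv).imp ((IsSubtree.left k (.refl _)).anc hnd)
          ((IsSubtree.left k (.refl _)).anc hnd)
      · exact .inr (anc_node_of_mem hnd (by simp [inorder, hu]))
      · exact absurd (ht.2.1.1 v hv) (huv.2 (ht.2.2 u hu k (.inl rfl)))
    · exact .inl (anc_node_of_mem hnd (by simp [inorder]; tauto))
    · rcases hv with hv | rfl | hv
      · exact absurd (ht.2.2 v hv u (.inr hu)) (lt_asymm huv.1)
      · exact .inr (anc_node_of_mem hnd (by simp [inorder, hu]))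
      · exact (anc_or_anc_of_covBy huv ht.2.1.2 hu hv).imp ((IsSubtree.right k (.refl _)).anc hnd)
          ((IsSubtree.right k (.refl _)).anc hnd)

theorem isSTG_pathGraph {n : ℕ} {t : BinaryTree (Fin n)} (ht : t.inorder = List.finRange n)
    (hnd : t.inorder.Nodup) : IsSTG (SimpleGraph.pathGraph n) (t.toRTree hnd) := by
  have hsorted : t.inorder.Pairwise (· < ·) := ht ▸ List.pairwise_lt_finRange n
  refine ⟨by simp [toRTree, ht], fun v _ => ?_, fun u v _ _ huv => ?_⟩
  · obtain ⟨l, r, hs⟩ := exists_isSubtree_of_mem (ht ▸ List.mem_finRange v)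
    have hdesc : (t.toRTree hnd).descSet v = {x | x ∈ (node v l r).inorder} :=
      Set.ext fun x => hs.anc_iff_mem hnd
    rw [restrictG_univ, hdesc]
    refine SimpleGraph.connected_induce_pathGraph ?_ ⟨v, by simp [inorder]⟩
    exact List.ordConnected_of_infix hsorted (by simp [ht, Set.ordConnected_univ]) hs.inorder_infix
  · have hu : u ∈ t.inorder := ht ▸ List.mem_finRange u
    have hv : v ∈ t.inorder := ht ▸ List.mem_finRange v
    rcases huv with huv | huv
    · exact anc_or_anc_of_covBy huv hsorted hu hv
    · exact (anc_or_anc_of_covBy huv hsorted hv hu).symm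

theorem weight_add_weight_le_wilberLam {n : ℕ} (w : Fin n → ℕ)
    {t : BinaryTree (Fin n)} (ht : t.inorder.Nodup) {k : Fin n} {l r : BinaryTree (Fin n)}
    (hs : IsSubtree (node k l r) t) (hl : l ≠ nil) (hr : r ≠ nil)
    (hlr : l.weight w ≤ r.weight w + w k) (hrl : r.weight w ≤ l.weight w + w k) :
    l.weight w + r.weight w ≤ wilberLam (t.toRTree ht) k (t.accessSeq w) + 1 := by
  classical
  set S := t.toRTree ht
  obtain ⟨-, -, hkl, hkr, hdisj⟩ := nodup_node (hs.nodup ht)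
  have hsep : ∀ x y, ¬(x = k ∧ y = k) → ¬(x ∈ l.inorder ∧ y ∈ l.inorder) →
      ¬(x ∈ r.inorder ∧ y ∈ r.inorder) →
      ¬((x = k ∧ y = k) ∨ ∃ ch, S.parent ch = some k ∧ S.Anc ch x ∧ S.Anc ch y) := by
    rintro x y hk hl hr (h | ⟨ch, hch, hx, hy⟩)
    · exact hk h
    · exact (hs.both_mem_of_anc_of_parentOf_eq_some ht hch hx hy).elim hl hr
  obtain ⟨c₁, hc₁, hpc₁⟩ := hs.exists_parentOf_eq_some_left ht hl
  obtain ⟨c₂, hc₂, hpc₂⟩ := hs.exists_parentOf_eq_some_right ht hr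
  rw [wilberLam, if_pos ⟨c₁, c₂, fun h => hdisj c₁ hc₁ (h ▸ hc₂), hpc₁, hpc₂⟩]
  have hfilter :
      (t.accessSeq w).filter (fun x => decide (S.Anc k x)) = (node k l r).accessSeq w := by
    rw [← hs.filter_accessSeq w ht]
    exact List.filter_congr fun x _ => decide_eq_decide.2 (hs.anc_iff_mem ht)
  rw [hfilter, accessSeq]
  split_ifs with hab
  · refine le_trans ?_ (List.min_length_le_pairAlt_interleave_add_one _ fun x hx y hy => ?_)
    · simp only [List.length_append, List.length_replicate, length_accessSeq]
      omega
    · simp only [List.mem_append, List.mem_replicate] at hx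
      replace hx := hx.imp (mem_inorder_of_mem_accessSeq w) And.right
      replace hy := mem_inorder_of_mem_accessSeq w hy
      constructor <;> apply hsep <;> grind
  · refine le_trans ?_ (List.min_length_le_pairAlt_interleave_add_one _ fun x hx y hy => ?_)
    · simp only [List.length_append, List.length_replicate, length_accessSeq]
      omega
    · simp only [List.mem_append, List.mem_replicate] at hy
      replace hy := hy.imp (mem_inorder_of_mem_accessSeq w) And.right
      replace hx := mem_inorder_of_mem_accessSeq w hx
      constructor <;> apply hsep <;> grind

end BinaryTree

theorem wilber_entropy_lower_bound_general (n : ℕ) (m : Fin n → ℕ) :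
    ∃ (S : RTree (Fin n)) (σ : List (Fin n)),
      IsSTG (SimpleGraph.pathGraph n) S ∧
      σ.length = ∑ i, m i ∧ (∀ i : Fin n, σ.count i = m i) ∧
      (1/4 : ℝ) * ((∑ i, m i : ℕ) : ℝ) * shannonH m ≤ (wilberL' S σ : ℝ) := by
  obtain ⟨t, ht, hbal⟩ := BinaryTree.exists_inorder_eq_balanced m (List.finRange n)
  have hnd : t.inorder.Nodup := ht ▸ List.nodup_finRange n
  have hweight : ∀ f : Fin n → ℕ, t.weight f = ∑ i, f i := fun f => by
    rw [BinaryTree.weight, ht, Fin.sum_univ_def]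
  set S := t.toRTree hnd
  set σ := t.accessSeq m
  have hcount : ∀ i, σ.count i = m i := fun i =>
    BinaryTree.count_accessSeq m hnd (ht ▸ List.mem_finRange i)
  have hent := BinaryTree.entropy_le_of_balanced m (fun u => wilberLam S u σ) hbal
    fun k l r hs hl hr => BinaryTree.weight_add_weight_le_wilberLam m hnd hs hl hr
      (hs.balanced m hbal).1 (hs.balanced m hbal).2.1
  rw [hweight, hweight] at hent
  have hH : ((∑ i, m i : ℕ) : ℝ) * shannonH m = t.entropy m / log 2 := by
    rw [BinaryTree.entropy, hweight, ht, ← Fin.sum_univ_def, Nat.cast_sum, sum_mul_shannonH]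
  have hΛ : wilberL' S σ = ∑ u, wilberLam S u σ + ∑ i, m i := by
    simp only [wilberL', wilberLam', Finset.sum_add_distrib, hcount]
  refine ⟨S, σ, BinaryTree.isSTG_pathGraph ht hnd, by rw [BinaryTree.length_accessSeq, hweight],
    hcount, ?_⟩
  have hlog := log_pos one_lt_two
  calc (1/4 : ℝ) * ((∑ i, m i : ℕ) : ℝ) * shannonH m = (1/4) * (t.entropy m / log 2) := by
        rw [mul_assoc, hH]
    _ ≤ (1/4) * (4 * log 2 * ((∑ u, wilberLam S u σ : ℕ) + (∑ i, m i : ℕ)) / log 2) := by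
        gcongr
    _ = wilberL' S σ := by
        rw [hΛ]
        field_simp
        push_cast
        ring

/-- there are a BST `S` and a sequence `σ` with prescribed frequencies
such that Wilber's first bound satisfies `Λ'(S,σ) ≥ (1/4)·m·H`. -/
theorem wilber_entropy_lower_bound (n : ℕ) (hn : 1 ≤ n) (m : Fin n → ℕ) :
    ∃ (S : RTree (Fin n)) (σ : List (Fin n)),
      IsSTG (SimpleGraph.pathGraph n) S ∧
      σ.length = ∑ i, m i ∧ (∀ i : Fin n, σ.count i = m i) ∧
      (1/4 : ℝ) * ((∑ i, m i : ℕ) : ℝ) * shannonH m ≤ (wilberL' S σ : ℝ) :=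
  wilber_entropy_lower_bound_general n m
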